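/- arXiv:2102.09149 — 2 statements merged into one kernel-verified Lean document; each statement's English description precedes it below -/
import Mathlib

section
/- Let ℋ = Σ_{i=1}^M p_i (I + s_i P_i)/2 be an N-qubit Hamiltonian with p_i > 0, Σ p_i = 1, s_i ∈ {+1,−1}, and each P_i a tensor product of Paulis with between 1 and 5 non-identity factors. Consider the verification procedure: sample i with probability p_i; sample (W_1,...,W_N) uniformly from {X,Y,Z}^N and S_V uniformly among subsets of [N] of size in [1,5]; accept automatically if P_i is inconsistent with (S_V,{W_j}) or a biased coin with heads-probability 1 − 3^{|S_i|−5} lands heads; otherwise measure the qubits of ρ indexed by S_i in the bases given by P_i with outcomes m'_j and accept iff (−1)^{⊕_{j∈S_i} m'_j} = −s_i. Then for any N-qubit density matrix ρ, the acceptance probability equals 1 − Tr(ρℋ)/N', where N' = 3^5 Σ_{i=1}^5 C(N,i). -/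
/-! For `ε = ±1` the indicator of the parity condition `(-1) ^ ∑ m_j = ε` is
`(1 + ε (-1) ^ ∑ m_j) / 2`. Since the single-qubit projectors satisfy `Π₀ + Π₁ = 1` and
`Π₀ - Π₁ = Q`, multilinearity of the tensor product turns the sum of the measured projectors into
`(1 - s_i P_i) / 2`, so the measurement step accepts with probability `1 - Tr(ρ h_i)`,
`h_i = (1 + s_i P_i) / 2`. Exactly `3 ^ (N - |S_i|)` of the `3 ^ N · #Ssp` samples are consistent
with `P_i`, and the coin rescales by `3 ^ (|S_i| - 5)`, so the rejection probability of term `i` is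
`Tr(ρ h_i) / (3 ^ 5 · #Ssp)` whatever `|S_i|` is; averaging over `i` gives `Tr(ρ ℋ) / N'`. -/

open Matrix Finset
open scoped Kronecker Classical BigOperators ComplexOrder

noncomputable section

def pX : Matrix (Fin 2) (Fin 2) ℂ := !![0, 1; 1, 0]
def pY : Matrix (Fin 2) (Fin 2) ℂ := !![0, -Complex.I; Complex.I, 0]
def pZ : Matrix (Fin 2) (Fin 2) ℂ := !![1, 0; 0, -1]
def pH : Matrix (Fin 2) (Fin 2) ℂ := (Real.sqrt 2 : ℂ)⁻¹ • !![1, 1; 1, -1]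

/-- Tensor product of `N` single-qubit operators, as an operator on `N` qubits. -/
def tensorOp (N : ℕ) (M : Fin N → Matrix (Fin 2) (Fin 2) ℂ) :
    Matrix (Fin N → Fin 2) (Fin N → Fin 2) ℂ :=
  Matrix.of fun f g => ∏ j, M j (f j) (g j)

/-- Projector onto the eigenvector of the Pauli `P` with eigenvalue `(-1)^m`. -/
def pauliProj (P : Matrix (Fin 2) (Fin 2) ℂ) (m : Fin 2) : Matrix (Fin 2) (Fin 2) ℂ :=
  (1 / 2 : ℂ) • (1 + ((-1 : ℂ) ^ (m : ℕ)) • P)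

/-- `X^x Z^z` on `N` qubits. -/
def XZ (N : ℕ) (x z : Fin N → Fin 2) : Matrix (Fin N → Fin 2) (Fin N → Fin 2) ℂ :=
  tensorOp N fun j => pX ^ (x j : ℕ) * pZ ^ (z j : ℕ)

/-- `Z^z X^x` on `N` qubits. -/
def ZX (N : ℕ) (x z : Fin N → Fin 2) : Matrix (Fin N → Fin 2) (Fin N → Fin 2) ℂ :=
  tensorOp N fun j => pZ ^ (z j : ℕ) * pX ^ (x j : ℕ)

/-- Pauli operator indexed by `Fin 4` (`0 ↦ I`, `1 ↦ X`, `2 ↦ Y`, `3 ↦ Z`). -/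
def pauliOf : Fin 4 → Matrix (Fin 2) (Fin 2) ℂ :=
  fun k => if k = 0 then 1 else if k = 1 then pX else if k = 2 then pY else pZ

/-- Amplitudes of `N` Bell pairs shared between two `N`-qubit registers. -/
def bellVec (N : ℕ) : (Fin N → Fin 2) × (Fin N → Fin 2) → ℂ :=
  fun q => if q.1 = q.2 then ((Real.sqrt 2 : ℂ)⁻¹) ^ N else 0

/-- Amplitudes of the two-qubit Bell basis state `|φ_{x,z}⟩ = (I ⊗ X^x Z^z)(|00⟩+|11⟩)/√2`. -/
def bellPairVec (x z : Fin 2) : Fin 2 × Fin 2 → ℂ :=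
  fun q => (Real.sqrt 2 : ℂ)⁻¹ * (pX ^ (x : ℕ) * pZ ^ (z : ℕ)) q.2 q.1

/-- Eigenvector with eigenvalue `(-1)^m` of the Pauli basis `w` (`0 ↦ X`, `1 ↦ Y`, `2 ↦ Z`). -/
def basisVec : Fin 3 → Fin 2 → Fin 2 → ℂ := fun w m k =>
  if w = 0 then (Real.sqrt 2 : ℂ)⁻¹ * (-1 : ℂ) ^ ((m : ℕ) * (k : ℕ))
  else if w = 1 then
    (if k = 0 then (Real.sqrt 2 : ℂ)⁻¹ else (-1 : ℂ) ^ (m : ℕ) * Complex.I * (Real.sqrt 2 : ℂ)⁻¹)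
  else (if k = m then 1 else 0)

lemma sum_pauliProj (Q : Matrix (Fin 2) (Fin 2) ℂ) : ∑ m, pauliProj Q m = 1 := by
  simp only [Fin.sum_univ_two, pauliProj, Fin.val_zero, Fin.val_one, pow_zero, pow_one]
  module

lemma sum_neg_one_pow_smul_pauliProj (Q : Matrix (Fin 2) (Fin 2) ℂ) :
    ∑ m : Fin 2, (-1 : ℂ) ^ (m : ℕ) • pauliProj Q m = Q := by
  simp only [Fin.sum_univ_two, pauliProj, Fin.val_zero, Fin.val_one, pow_zero, pow_one]
  module

lemma ite_eq_half_one_add_mul_of_sign (σ ε : ℤ) (hσ : σ = 1 ∨ σ = -1) (hε : ε = 1 ∨ ε = -1) :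
    (if σ = ε then 1 else 0 : ℂ) = (1 + ε * σ) / 2 := by
  rcases hσ with rfl | rfl <;> rcases hε with rfl | rfl <;> norm_num

section Qubits

variable {N : ℕ}

lemma tensorOp_one : tensorOp N (fun _ => 1) = 1 := by
  ext f g
  simp only [tensorOp, of_apply, one_apply, prod_boole, funext_iff]
  simp

lemma tensorOp_smul (c : Fin N → ℂ) (A : Fin N → Matrix (Fin 2) (Fin 2) ℂ) :
    tensorOp N (fun j => c j • A j) = (∏ j, c j) • tensorOp N A := by
  ext f g
  simp [tensorOp, prod_mul_distrib]

lemma tensorOp_sum {ι : Type*} (t : Fin N → Finset ι)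
    (A : Fin N → ι → Matrix (Fin 2) (Fin 2) ℂ) :
    tensorOp N (fun j => ∑ x ∈ t j, A j x) =
      ∑ m ∈ Fintype.piFinset t, tensorOp N (fun j => A j (m j)) := by
  ext f g
  simp only [tensorOp, of_apply, Matrix.sum_apply, prod_univ_sum]

lemma tensorOp_ite_pauliOf (S : Finset (Fin N)) (P : Fin N → Fin 4)
    (hS : ∀ j ∉ S, P j = 0) :
    tensorOp N (fun j => if j ∈ S then pauliOf (P j) else 1) =
      tensorOp N (fun j => pauliOf (P j)) := by
  congr 1
  funext j
  split_ifs with hj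
  · rfl
  · simp [hS j hj, pauliOf]

lemma sum_tensorOp_pauliProj_of_parity (S : Finset (Fin N))
    (Q : Fin N → Matrix (Fin 2) (Fin 2) ℂ) (ε : ℤ) (hε : ε = 1 ∨ ε = -1) :
    ∑ m ∈ univ.filter (fun m : Fin N → Fin 2 =>
        (∀ j, j ∉ S → m j = 0) ∧ (-1 : ℤ) ^ (∑ j ∈ S, (m j : ℕ)) = ε),
      tensorOp N (fun j => if j ∈ S then pauliProj (Q j) (m j) else 1) =
    (1 / 2 : ℂ) • (1 + (ε : ℂ) • tensorOp N (fun j => if j ∈ S then Q j else 1)) := by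
  set t : Fin N → Finset (Fin 2) := fun j => if j ∈ S then univ else {0}
  set F : (Fin N → Fin 2) → Matrix (Fin N → Fin 2) (Fin N → Fin 2) ℂ :=
    fun m => tensorOp N (fun j => if j ∈ S then pauliProj (Q j) (m j) else 1)
  set σ : (Fin N → Fin 2) → ℤ := fun m => (-1 : ℤ) ^ (∑ j ∈ S, (m j : ℕ))
  have hsupport : univ.filter (fun m : Fin N → Fin 2 => ∀ j, j ∉ S → m j = 0) =
      Fintype.piFinset t := by
    ext m
    simp only [mem_filter, mem_univ, true_and, Fintype.mem_piFinset, t]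
    refine forall_congr' fun j => ?_
    by_cases hj : j ∈ S <;> simp [hj]
  have hsum : ∑ m ∈ Fintype.piFinset t, F m = 1 := by
    refine (tensorOp_sum t fun j x => if j ∈ S then pauliProj (Q j) x else 1).symm.trans ?_
    rw [← tensorOp_one]
    congr 1
    funext j
    by_cases hj : j ∈ S
    · simp only [t, if_pos hj]
      exact sum_pauliProj _
    · simp [t, hj]
  have hsigned : ∑ m ∈ Fintype.piFinset t, (σ m : ℂ) • F m =
      tensorOp N (fun j => if j ∈ S then Q j else 1) := by
    have hσF : ∀ m, (σ m : ℂ) • F m = tensorOp N (fun j =>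
        if j ∈ S then (-1 : ℂ) ^ (m j : ℕ) • pauliProj (Q j) (m j) else 1) := by
      intro m
      rw [show (σ m : ℂ) = ∏ j, if j ∈ S then (-1 : ℂ) ^ (m j : ℕ) else 1 by
        simp [σ, prod_ite_mem, prod_pow_eq_pow_sum], ← tensorOp_smul]
      congr 1
      funext j
      split_ifs <;> simp
    simp_rw [hσF]
    refine (tensorOp_sum t fun j x =>
      if j ∈ S then (-1 : ℂ) ^ (x : ℕ) • pauliProj (Q j) x else 1).symm.trans ?_
    congr 1
    funext j
    by_cases hj : j ∈ S
    · simp only [t, if_pos hj]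
      exact sum_neg_one_pow_smul_pauliProj _
    · simp [t, hj]
  calc _ = ∑ m ∈ Fintype.piFinset t, (if σ m = ε then (1 : ℂ) else 0) • F m := by
        rw [← filter_filter, hsupport, sum_filter]
        simp only [ite_smul, one_smul, zero_smul]
        rfl
    _ = ∑ m ∈ Fintype.piFinset t, ((1 + ε * σ m) / 2 : ℂ) • F m := by
        refine sum_congr rfl fun m _ => ?_
        rw [ite_eq_half_one_add_mul_of_sign (σ m) ε (neg_one_pow_eq_or ℤ _) hε]
    _ = _ := by
        simp_rw [add_div, add_smul, sum_add_distrib, mul_div_right_comm, mul_smul,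
          ← smul_sum, hsum, hsigned]
        module

lemma sum_trace_pauliProj_of_parity (ρ : Matrix (Fin N → Fin 2) (Fin N → Fin 2) ℂ)
    (hρ : ρ.trace = 1) (S : Finset (Fin N)) (P : Fin N → Fin 4)
    (hS : ∀ j ∉ S, P j = 0) (σ : ℤ) (hσ : σ = 1 ∨ σ = -1) :
    ∑ m ∈ univ.filter (fun m : Fin N → Fin 2 =>
        (∀ j, j ∉ S → m j = 0) ∧ (-1 : ℤ) ^ (∑ j ∈ S, (m j : ℕ)) = -σ),
      (tensorOp N (fun j => if j ∈ S then pauliProj (pauliOf (P j)) (m j) else 1) * ρ).trace =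
    1 - (ρ * ((1 / 2 : ℂ) • (1 + (σ : ℂ) • tensorOp N fun j => pauliOf (P j)))).trace := by
  have hε : -σ = 1 ∨ -σ = -1 := by omega
  rw [← trace_sum, ← sum_mul, sum_tensorOp_pauliProj_of_parity S _ _ hε,
    tensorOp_ite_pauliOf S P hS]
  simp only [Matrix.smul_mul, Matrix.mul_smul, Matrix.add_mul, Matrix.mul_add, Matrix.one_mul,
    Matrix.mul_one, trace_smul, trace_add, hρ, trace_mul_comm ρ, smul_eq_mul]
  push_cast
  ring

end Qubits

lemma card_filter_card_mem_Icc (α : Type*) [Fintype α] (a b : ℕ) :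
    #(univ.filter fun S : Finset α => a ≤ #S ∧ #S ≤ b) =
      ∑ k ∈ Icc a b, (Fintype.card α).choose k := by
  rw [card_eq_sum_card_fiberwise (f := card) (t := Icc a b) fun S hS => by simpa using hS]
  refine sum_congr rfl fun k hk => ?_
  rw [← card_univ, ← card_powersetCard, powersetCard_eq_filter, powerset_univ, filter_filter]
  congr 1
  refine filter_congr fun S _ => ?_
  constructor
  · exact fun h => h.2
  · rintro rfl
    exact ⟨mem_Icc.mp hk, rfl⟩

lemma card_filter_forall_mem_eq {ι α : Type*} [Fintype ι] [DecidableEq ι] [Fintype α]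
    [DecidableEq α] (S : Finset ι) (w₀ : ι → α) :
    #(univ.filter fun w : ι → α => ∀ j ∈ S, w j = w₀ j) =
      Fintype.card α ^ (Fintype.card ι - #S) := by
  have hpi : univ.filter (fun w : ι → α => ∀ j ∈ S, w j = w₀ j) =
      Fintype.piFinset fun j => if j ∈ S then {w₀ j} else univ := by
    ext w
    simp only [mem_filter, mem_univ, true_and, Fintype.mem_piFinset]
    refine ⟨fun h j => ?_, fun h j hj => by simpa [hj] using h j⟩
    by_cases hj : j ∈ S <;> simp [hj, h]
  simp only [hpi, Fintype.card_piFinset, apply_ite card, card_singleton, card_univ]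
  rw [prod_ite, prod_const_one, prod_const, one_mul, filter_not, filter_mem_eq_inter,
    univ_inter, ← compl_eq_univ_sdiff, card_compl]

lemma card_filter_val_succ_eq {N : ℕ} (S : Finset (Fin N)) (P : Fin N → Fin 4)
    (hS : ∀ j ∈ S, P j ≠ 0) :
    #(univ.filter fun w : Fin N → Fin 3 => ∀ j ∈ S, (w j : ℕ) + 1 = (P j : ℕ)) =
      3 ^ (N - #S) := by
  let w₀ : Fin N → Fin 3 := fun j => if h : P j = 0 then 0 else (P j).pred h
  have hw₀ : ∀ j ∈ S, ∀ w : Fin N → Fin 3, (w j : ℕ) + 1 = (P j : ℕ) ↔ w j = w₀ j := by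
    intro j hj w
    have hpos := (P j).pos_iff_ne_zero.mpr (hS j hj)
    simp only [w₀]
    rw [dif_neg (hS j hj), Fin.ext_iff, Fin.val_pred]
    omega
  calc _ = #(univ.filter fun w : Fin N → Fin 3 => ∀ j ∈ S, w j = w₀ j) :=
        congrArg card (filter_congr fun w _ => forall₂_congr fun j hj => hw₀ j hj w)
    _ = 3 ^ (N - #S) := by
        convert card_filter_forall_mem_eq S w₀ using 2
        · ext; simp
        all_goals simp

lemma sum_ite_else_one {ι R : Type*} [CommRing R] (s : Finset ι) (p : ι → Prop) [DecidablePred p]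
    (a : R) : ∑ q ∈ s, (if p q then a else 1) = #s + #(s.filter p) * (a - 1) := by
  rw [sum_ite, sum_const, sum_const, nsmul_eq_mul, nsmul_eq_mul,
    ← card_filter_add_card_filter_not (s := s) p]
  push_cast
  ring

lemma pow_sub_mul_zpow_sub {K : Type*} [Field K] {x : K} (hx : x ≠ 0) {k N : ℕ} (hk : k ≤ N)
    (c : ℤ) : x ^ (N - k) * x ^ ((k : ℤ) - c) = x ^ ((N : ℤ) - c) := by
  rw [← zpow_natCast, ← zpow_add₀ hx, Nat.cast_sub hk]
  ring_nf

lemma average_acceptance {N : ℕ} (𝒮 : Finset (Finset (Fin N))) (S : Finset (Fin N))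
    (hS𝒮 : S ∈ 𝒮) (P : Fin N → Fin 4) (hS : ∀ j ∈ S, P j ≠ 0) (n : ℕ) (x : ℂ) :
    ((3 : ℂ) ^ N * #𝒮)⁻¹ * ∑ q ∈ (univ : Finset (Fin N → Fin 3)) ×ˢ 𝒮,
        (if q.2 = S ∧ ∀ j ∈ S, (q.1 j : ℕ) + 1 = (P j : ℕ) then
          (1 - (3 : ℂ) ^ ((#S : ℤ) - n)) + (3 : ℂ) ^ ((#S : ℤ) - n) * (1 - x) else 1) =
      1 - x / ((3 : ℂ) ^ n * #𝒮) := by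
  have hcons : (univ ×ˢ 𝒮).filter (fun q : (Fin N → Fin 3) × Finset (Fin N) =>
      q.2 = S ∧ ∀ j ∈ S, (q.1 j : ℕ) + 1 = (P j : ℕ)) =
      (univ.filter fun w : Fin N → Fin 3 => ∀ j ∈ S, (w j : ℕ) + 1 = (P j : ℕ)) ×ˢ {S} := by
    ext ⟨w, T⟩
    simp only [mem_filter, mem_product, mem_univ, true_and, mem_singleton]
    constructor
    · exact fun ⟨_, hT, hw⟩ => ⟨hw, hT⟩
    · rintro ⟨hw, rfl⟩
      exact ⟨hS𝒮, rfl, hw⟩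
  have h𝒮 : (#𝒮 : ℂ) ≠ 0 := Nat.cast_ne_zero.mpr (card_ne_zero_of_mem hS𝒮)
  have hpow : (3 ^ (N - #S) : ℂ) * (3 : ℂ) ^ ((#S : ℤ) - n) = 3 ^ N / 3 ^ n := by
    rw [pow_sub_mul_zpow_sub three_ne_zero (card_le_univ S |>.trans_eq (Fintype.card_fin N)),
      zpow_sub₀ three_ne_zero, zpow_natCast, zpow_natCast]
  rw [sum_ite_else_one, hcons, card_product, card_product, card_singleton, mul_one,
    card_filter_val_succ_eq S P hS, card_univ, Fintype.card_pi]
  simp only [Fintype.card_fin, prod_const, card_univ]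
  push_cast
  rw [show ∀ t : ℂ, 1 - t + t * (1 - x) - 1 = -(t * x) from fun t => by ring, mul_neg,
    ← mul_assoc, hpow]
  field_simp
  ring

theorem stmt_8_general (N M : ℕ)
    (p : Fin M → ℝ) (hpsum : ∑ i, p i = 1)
    (s : Fin M → ℤ) (hs : ∀ i, s i = 1 ∨ s i = -1)
    (P : Fin M → Fin N → Fin 4)
    (supp : Fin M → Finset (Fin N))
    (hsupp : ∀ i, supp i = Finset.univ.filter fun j => P i j ≠ 0)
    (hk1 : ∀ i, 1 ≤ (supp i).card) (hk5 : ∀ i, (supp i).card ≤ 5)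
    (ρ : Matrix (Fin N → Fin 2) (Fin N → Fin 2) ℂ)
    (hρtr : ρ.trace = 1)
    (Ham : Matrix (Fin N → Fin 2) (Fin N → Fin 2) ℂ)
    (hHam : Ham = ∑ i, ((p i : ℝ) : ℂ) •
      ((1 / 2 : ℂ) • (1 + (s i : ℂ) • tensorOp N fun j => pauliOf (P i j)))) :
    -- sample space of subsets S_V with 1 ≤ |S_V| ≤ 5
    let Ssp : Finset (Finset (Fin N)) :=
      Finset.univ.filter fun S => 1 ≤ S.card ∧ S.card ≤ 5
    -- consistency of P_i with (S_V, {W_j})  (W : Fin 3 with 0 ↦ X, 1 ↦ Y, 2 ↦ Z)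
    let consistent : Fin M → (Fin N → Fin 3) → Finset (Fin N) → Prop :=
      fun i w S => S = supp i ∧ ∀ j ∈ supp i, ((w j : ℕ) + 1) = (P i j : ℕ)
    -- probability of accepting in the measurement step for the term i
    let measAcc : Fin M → ℂ := fun i =>
      ∑ m ∈ Finset.univ.filter (fun m : Fin N → Fin 2 =>
          (∀ j, j ∉ supp i → m j = 0) ∧
          (-1 : ℤ) ^ (∑ j ∈ supp i, (m j : ℕ)) = -(s i)),
        (tensorOp N (fun j =>
            if j ∈ supp i then pauliProj (pauliOf (P i j)) (m j) else 1) * ρ).trace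
    -- total acceptance probability of the verification procedure
    (∑ i, ((p i : ℝ) : ℂ) * (((3 : ℂ) ^ N * (Ssp.card : ℂ))⁻¹ *
        ∑ q ∈ (Finset.univ : Finset (Fin N → Fin 3)) ×ˢ Ssp,
          (if consistent i q.1 q.2 then
              (1 - (3 : ℂ) ^ (((supp i).card : ℤ) - 5)) +
                (3 : ℂ) ^ (((supp i).card : ℤ) - 5) * measAcc i
            else 1)))
      = 1 - (ρ * Ham).trace / ((3 ^ 5 * ∑ i ∈ Finset.Icc 1 5, N.choose i : ℕ) : ℂ) := by
  intro Ssp consistent measAcc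
  have hSsp : ∀ i, supp i ∈ Ssp := fun i => mem_filter.mpr ⟨mem_univ _, hk1 i, hk5 i⟩
  have hP : ∀ i, ∀ j ∈ supp i, P i j ≠ 0 := fun i j hj => by simpa [hsupp i] using hj
  have hP' : ∀ i, ∀ j ∉ supp i, P i j = 0 := fun i j hj => by simpa [hsupp i] using hj
  calc _ = ∑ i, ((p i : ℝ) : ℂ) * (1 - (ρ * ((1 / 2 : ℂ) •
        (1 + (s i : ℂ) • tensorOp N fun j => pauliOf (P i j)))).trace / ((3 : ℂ) ^ 5 * #Ssp)) :=
        sum_congr rfl fun i _ => by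
          rw [show measAcc i = _ from sum_trace_pauliProj_of_parity ρ hρtr _ _ (hP' i) _ (hs i)]
          exact congrArg _ (average_acceptance Ssp _ (hSsp i) _ (hP i) 5 _)
    _ = _ := by
      simp only [mul_sub, mul_one, sum_sub_distrib, mul_div_assoc', ← sum_div]
      rw [← Complex.ofReal_sum, hpsum, hHam, Matrix.mul_sum, trace_sum,
        card_filter_card_mem_Icc, Fintype.card_fin]
      simp only [Matrix.mul_smul, trace_smul, smul_eq_mul]
      push_cast
      norm_num

theorem stmt_8 (N M : ℕ) (hN : 1 ≤ N)
    (p : Fin M → ℝ) (hp : ∀ i, 0 < p i) (hpsum : ∑ i, p i = 1)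
    (s : Fin M → ℤ) (hs : ∀ i, s i = 1 ∨ s i = -1)
    (P : Fin M → Fin N → Fin 4)
    (supp : Fin M → Finset (Fin N))
    (hsupp : ∀ i, supp i = Finset.univ.filter fun j => P i j ≠ 0)
    (hk1 : ∀ i, 1 ≤ (supp i).card) (hk5 : ∀ i, (supp i).card ≤ 5)
    (ρ : Matrix (Fin N → Fin 2) (Fin N → Fin 2) ℂ)
    (hρ : ρ.PosSemidef) (hρtr : ρ.trace = 1)
    (Ham : Matrix (Fin N → Fin 2) (Fin N → Fin 2) ℂ)
    (hHam : Ham = ∑ i, ((p i : ℝ) : ℂ) •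
      ((1 / 2 : ℂ) • (1 + (s i : ℂ) • tensorOp N fun j => pauliOf (P i j)))) :
    -- sample space of subsets S_V with 1 ≤ |S_V| ≤ 5
    let Ssp : Finset (Finset (Fin N)) :=
      Finset.univ.filter fun S => 1 ≤ S.card ∧ S.card ≤ 5
    -- consistency of P_i with (S_V, {W_j})  (W : Fin 3 with 0 ↦ X, 1 ↦ Y, 2 ↦ Z)
    let consistent : Fin M → (Fin N → Fin 3) → Finset (Fin N) → Prop :=
      fun i w S => S = supp i ∧ ∀ j ∈ supp i, ((w j : ℕ) + 1) = (P i j : ℕ)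
    -- probability of accepting in the measurement step for the term i
    let measAcc : Fin M → ℂ := fun i =>
      ∑ m ∈ Finset.univ.filter (fun m : Fin N → Fin 2 =>
          (∀ j, j ∉ supp i → m j = 0) ∧
          (-1 : ℤ) ^ (∑ j ∈ supp i, (m j : ℕ)) = -(s i)),
        (tensorOp N (fun j =>
            if j ∈ supp i then pauliProj (pauliOf (P i j)) (m j) else 1) * ρ).trace
    -- total acceptance probability of the verification procedure
    (∑ i, ((p i : ℝ) : ℂ) * (((3 : ℂ) ^ N * (Ssp.card : ℂ))⁻¹ *
        ∑ q ∈ (Finset.univ : Finset (Fin N → Fin 3)) ×ˢ Ssp,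
          (if consistent i q.1 q.2 then
              (1 - (3 : ℂ) ^ (((supp i).card : ℤ) - 5)) +
                (3 : ℂ) ^ (((supp i).card : ℤ) - 5) * measAcc i
            else 1)))
      = 1 - (ρ * Ham).trace / ((3 ^ 5 * ∑ i ∈ Finset.Icc 1 5, N.choose i : ℕ) : ℂ) :=
  stmt_8_general N M p hpsum s hs P supp hsupp hk1 hk5 ρ hρtr Ham hHam
end
end

section
/- (Hiding of unopened shares in 1-out-of-n OT) Let μ'_{i,0} := μ_i ⊕ r_{i−1} and μ'_{i,1} := r_i ⊕ r_{i−1}, where r_0 = 0^ℓ and r_1,...,r_{n−1} are uniform and independent. Then for any fixed j ∈ [n], the distribution of the tuple (μ'_{1,1},...,μ'_{j−1,1}, μ'_{1,0},...,μ'_{n,0}) when μ_i for i ≠ j are the true messages is identical to the distribution when each μ'_{i,0} for i > j is replaced by an independent uniform element of {0,1}^ℓ. -/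
open Matrix Finset
open scoped Kronecker Classical BigOperators ComplexOrder

noncomputable section

lemma map_equiv_uniform {A B : Type*} [Fintype A] [Fintype B] [Nonempty A] [Nonempty B]
    (e : A ≃ B) : (PMF.uniformOfFintype A).map e = PMF.uniformOfFintype B := by
  ext b
  rw [PMF.map_apply, tsum_fintype]
  simp only [PMF.uniformOfFintype_apply]
  rw [Finset.sum_eq_single (e.symm b)]
  · simp [Fintype.card_congr e]
  · intro a _ ha
    rw [if_neg]
    intro h; exact ha (by simp [h])
  · simp

lemma map_fst_uniform {A B : Type*} [Fintype A] [Fintype B] [Nonempty A] [Nonempty B] :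
    (PMF.uniformOfFintype (A × B)).map Prod.fst = PMF.uniformOfFintype A := by
  ext a
  rw [PMF.map_apply, tsum_fintype]
  have hinv : ((Fintype.card A : ENNReal) * (Fintype.card B : ENNReal))⁻¹
      = (Fintype.card A : ENNReal)⁻¹ * (Fintype.card B : ENNReal)⁻¹ :=
    ENNReal.mul_inv (Or.inl (by simp [Fintype.card_ne_zero])) (Or.inl (by simp))
  simp only [PMF.uniformOfFintype_apply, Fintype.card_prod, Nat.cast_mul, hinv]
  rw [Fintype.sum_prod_type]
  have h1 : ∀ x : A, (∑ _y : B, if a = x then ((Fintype.card A : ENNReal))⁻¹ * ((Fintype.card B : ENNReal))⁻¹ else 0)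
      = if a = x then (Fintype.card A : ENNReal)⁻¹ else 0 := by
    intro x
    split
    · rw [Finset.sum_const, Finset.card_univ, nsmul_eq_mul, ← mul_assoc,
        mul_comm (Fintype.card B : ENNReal), mul_assoc,
        ENNReal.mul_inv_cancel (by simp [Fintype.card_ne_zero]) (by simp), mul_one]
    · simp
  simp only [h1, Finset.sum_ite_eq, Finset.mem_univ, if_true]

def rr (ℓ n : ℕ) (ω : Fin (n + 1) → Fin ℓ → ZMod 2) : ℕ → Fin ℓ → ZMod 2 :=
  fun i => if i = 0 then 0 else if h : i < n + 1 then ω ⟨i, h⟩ else 0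

def uu (ℓ n : ℕ) (ω : Fin (n + 1) → Fin ℓ → ZMod 2) : ℕ → Fin ℓ → ZMod 2 :=
  fun i => if h : i < n + 1 then ω ⟨i, h⟩ else 0

lemma add_self' {ℓ : ℕ} (a b : Fin ℓ → ZMod 2) : a + b + b = a := by
  rw [add_assoc]
  have : b + b = 0 := by
    funext x
    exact CharTwo.add_self_eq_zero (b x)
  rw [this, add_zero]

theorem stmt_17 (ℓ n : ℕ) (j : ℕ) (hj1 : 1 ≤ j) (hjn : j ≤ n)
    (μ : ℕ → Fin ℓ → ZMod 2) :
    -- real tuple: branch-1 shares for 1 ≤ i ≤ j-1 and branch-0 shares for 1 ≤ i ≤ n,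
    -- from uniform randomness r_1,...,r_{n-1} (r_0 = 0)
    let tuple : (Fin (n + 1) → Fin ℓ → ZMod 2) →
        (ℕ → Fin ℓ → ZMod 2) × (ℕ → Fin ℓ → ZMod 2) := fun ω =>
      let r : ℕ → Fin ℓ → ZMod 2 := fun i =>
        if i = 0 then 0 else if h : i < n + 1 then ω ⟨i, h⟩ else 0
      (fun i => if 1 ≤ i ∧ i ≤ j - 1 then r i + r (i - 1) else 0,
       fun i => if 1 ≤ i ∧ i ≤ n then μ i + r (i - 1) else 0)
    -- ideal tuple: the branch-0 shares with index i > j replaced by fresh uniform values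
    let tuple' : (Fin (n + 1) → Fin ℓ → ZMod 2) × (Fin (n + 1) → Fin ℓ → ZMod 2) →
        (ℕ → Fin ℓ → ZMod 2) × (ℕ → Fin ℓ → ZMod 2) := fun ωu =>
      let r : ℕ → Fin ℓ → ZMod 2 := fun i =>
        if i = 0 then 0 else if h : i < n + 1 then ωu.1 ⟨i, h⟩ else 0
      let u : ℕ → Fin ℓ → ZMod 2 := fun i =>
        if h : i < n + 1 then ωu.2 ⟨i, h⟩ else 0
      (fun i => if 1 ≤ i ∧ i ≤ j - 1 then r i + r (i - 1) else 0,
       fun i => if 1 ≤ i ∧ i ≤ n then (if j < i then u i else μ i + r (i - 1)) else 0)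
    (PMF.uniformOfFintype (Fin (n + 1) → Fin ℓ → ZMod 2)).map tuple
      = (PMF.uniformOfFintype
          ((Fin (n + 1) → Fin ℓ → ZMod 2) × (Fin (n + 1) → Fin ℓ → ZMod 2))).map tuple' := by
  intro tuple tuple'
  set σ : (Fin (n + 1) → Fin ℓ → ZMod 2) × (Fin (n + 1) → Fin ℓ → ZMod 2) →
      (Fin (n + 1) → Fin ℓ → ZMod 2) × (Fin (n + 1) → Fin ℓ → ZMod 2) := fun p =>
    (fun k => if h : j ≤ (k : ℕ) ∧ (k : ℕ) < n
        then p.2 ⟨(k : ℕ) + 1, by omega⟩ + μ ((k : ℕ) + 1) else p.1 k,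
     fun i => if h : j + 1 ≤ (i : ℕ) ∧ (i : ℕ) ≤ n
        then p.1 ⟨(i : ℕ) - 1, by omega⟩ + μ (i : ℕ) else p.2 i) with hσdef
  have hσ : Function.Involutive σ := by
    intro p
    refine Prod.ext ?_ ?_
    · funext k
      show (σ (σ p)).1 k = p.1 k
      by_cases h : j ≤ (k : ℕ) ∧ (k : ℕ) < n
      · rw [hσdef]
        simp only [dif_pos h]
        rw [dif_pos (show j + 1 ≤ (k : ℕ) + 1 ∧ (k : ℕ) + 1 ≤ n by omega)]
        have hk : (⟨(k : ℕ) + 1 - 1, by omega⟩ : Fin (n + 1)) = k := by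
          apply Fin.ext; simp
        rw [hk]
        exact add_self' _ _
      · rw [hσdef]
        simp only [dif_neg h]
    · funext i
      show (σ (σ p)).2 i = p.2 i
      by_cases h : j + 1 ≤ (i : ℕ) ∧ (i : ℕ) ≤ n
      · rw [hσdef]
        simp only [dif_pos h]
        rw [dif_pos (show j ≤ (i : ℕ) - 1 ∧ (i : ℕ) - 1 < n by omega)]
        have hk : (⟨(i : ℕ) - 1 + 1, by omega⟩ : Fin (n + 1)) = i := by
          apply Fin.ext; simp; omega
        have hmi : (i : ℕ) - 1 + 1 = (i : ℕ) := by omega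
        rw [hk, hmi]
        exact add_self' _ _
      · rw [hσdef]
        simp only [dif_neg h]
  -- rr is preserved below j
  have h_lt : ∀ (p : (Fin (n + 1) → Fin ℓ → ZMod 2) × (Fin (n + 1) → Fin ℓ → ZMod 2)) (i : ℕ), i < j → rr ℓ n (σ p).1 i = rr ℓ n p.1 i := by
    intro p i hij
    unfold rr
    by_cases h0 : i = 0
    · simp [h0]
    · have hin : i < n + 1 := by omega
      rw [if_neg h0, if_neg h0, dif_pos hin, dif_pos hin, hσdef]
      simp only
      rw [dif_neg (by simp; omega)]
  have h_ge : ∀ (p : (Fin (n + 1) → Fin ℓ → ZMod 2) × (Fin (n + 1) → Fin ℓ → ZMod 2)) (i : ℕ), j < i → i ≤ n →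
      μ i + rr ℓ n (σ p).1 (i - 1) = uu ℓ n p.2 i := by
    intro p i hji hin
    unfold rr uu
    have h0 : i - 1 ≠ 0 := by omega
    have h1 : i - 1 < n + 1 := by omega
    rw [if_neg h0, dif_pos h1, dif_pos (show i < n + 1 by omega), hσdef]
    simp only
    rw [dif_pos (show j ≤ i - 1 ∧ i - 1 < n by omega)]
    have hk : (⟨(i - 1) + 1, by omega⟩ : Fin (n + 1)) = ⟨i, by omega⟩ := by
      apply Fin.ext; simp; omega
    rw [hk]
    have hmi : (i - 1) + 1 = i := by omega
    rw [hmi, add_comm (p.2 _) (μ i), ← add_assoc]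
    exact congrArg (· + p.2 _) (by
      funext x; exact CharTwo.add_self_eq_zero (μ i x)) |>.trans (zero_add _)
  -- key functional identity
  have hkey : tuple' = (tuple ∘ Prod.fst) ∘ σ := by
    funext p
    show tuple' p = tuple (σ p).1
    have ht : tuple (σ p).1 =
        (fun i => if 1 ≤ i ∧ i ≤ j - 1 then rr ℓ n (σ p).1 i + rr ℓ n (σ p).1 (i - 1) else 0,
         fun i => if 1 ≤ i ∧ i ≤ n then μ i + rr ℓ n (σ p).1 (i - 1) else 0) := rfl
    have ht' : tuple' p =
        (fun i => if 1 ≤ i ∧ i ≤ j - 1 then rr ℓ n p.1 i + rr ℓ n p.1 (i - 1) else 0,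
         fun i => if 1 ≤ i ∧ i ≤ n then (if j < i then uu ℓ n p.2 i
            else μ i + rr ℓ n p.1 (i - 1)) else 0) := rfl
    rw [ht, ht']
    refine Prod.ext ?_ ?_
    · funext i
      simp only
      by_cases h : 1 ≤ i ∧ i ≤ j - 1
      · rw [if_pos h, if_pos h, h_lt p i (by omega), h_lt p (i - 1) (by omega)]
      · rw [if_neg h, if_neg h]
    · funext i
      simp only
      by_cases h : 1 ≤ i ∧ i ≤ n
      · rw [if_pos h, if_pos h]
        by_cases hji : j < i
        · rw [if_pos hji, h_ge p i hji h.2]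
        · rw [if_neg hji, h_lt p (i - 1) (by omega)]
      · rw [if_neg h, if_neg h]
  have hu : (PMF.uniformOfFintype ((Fin (n + 1) → Fin ℓ → ZMod 2) × (Fin (n + 1) → Fin ℓ → ZMod 2))).map σ = PMF.uniformOfFintype ((Fin (n + 1) → Fin ℓ → ZMod 2) × (Fin (n + 1) → Fin ℓ → ZMod 2)) := by
    have := map_equiv_uniform (hσ.toPerm σ)
    rwa [Function.Involutive.coe_toPerm] at this
  symm
  rw [hkey, ← PMF.map_comp, hu, ← PMF.map_comp, map_fst_uniform]
end
end
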